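/- For every N ≥ 1, t > 0 and x ∈ W_N^A, the Vandermonde harmonic transform conserves total mass: ∫_{W_N^A} h_N(y) · det_{1≤i,j≤N}[p_t(y_i|x_j)] dy = h_N(x). Equivalently, the noncolliding Brownian motion transition density p_t^N(y|x) = (h_N(y)/h_N(x)) det_{1≤i,j≤N}[p_t(y_i|x_j)] satisfies ∫_{W_N^A} p_t^N(y|x) dy = 1. -/

import Mathlib

open MeasureTheory

/-- The one-dimensional Gaussian heat kernel `p_t(b|a)`. -/
noncomputable def heatKer (t b a : ℝ) : ℝ :=
  (1 / Real.sqrt (2 * Real.pi * t)) * Real.exp (-(a - b) ^ 2 / (2 * t))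

/-- The product of differences `h_N(x) = ∏_{1 ≤ i < j ≤ N} (x_j − x_i)`. -/
noncomputable def prodDiff (N : ℕ) (x : Fin N → ℝ) : ℝ :=
  ∏ i : Fin N, ∏ j ∈ Finset.Ioi i, (x j - x i)

/-!
Expanding `det[p_t(y_i|x_j)]` over permutations and using that `h_N` is alternating, the
integrand is `∑_σ G (y ∘ σ)` with `G y = h_N(y) ∏_j p_t(y_j|x_j)`. The chambers `σ(W_N^A)` tile
`ℝ^N` up to the null set of non-injective points, so the integral over `W_N^A` is `∫_{ℝ^N} G`.
Finally `G y = det[y_j^i p_t(y_j|x_j)]`; integrating column by column gives `det[q_i(x_j)]` with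
`q_i(a) = ∫ y^i p_t(y|a) dy`, a monic polynomial of degree `i` in `a`, and such a determinant is
the Vandermonde determinant `h_N(x)`.
-/

open ProbabilityTheory
open scoped NNReal ENNReal

section DetOfApply

variable {ι X : Type*} [Fintype ι] [DecidableEq ι] [MeasurableSpace X] {μ : Measure X}
  [SigmaFinite μ] {f : ι → ι → X → ℝ}

lemma integrable_det_of_apply (hf : ∀ i j, Integrable (f i j) μ) :
    Integrable (fun y : ι → X => (Matrix.of fun i j => f i j (y j)).det)
      (Measure.pi fun _ => μ) := by
  simp_rw [Matrix.det_apply']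
  exact integrable_finsetSum _ fun σ _ =>
    (Integrable.fintype_prod fun i => hf (σ i) i).const_mul _

lemma integral_det_of_apply (hf : ∀ i j, Integrable (f i j) μ) :
    ∫ y : ι → X, (Matrix.of fun i j => f i j (y j)).det ∂(Measure.pi fun _ => μ)
      = (Matrix.of fun i j => ∫ u, f i j u ∂μ).det := by
  simp_rw [Matrix.det_apply']
  rw [integral_finsetSum _ fun σ _ =>
    (Integrable.fintype_prod fun i => hf (σ i) i).const_mul _]
  simp_rw [integral_const_mul, Matrix.of_apply]
  congr! 2 with σ
  exact integral_fintype_prod_eq_prod fun i => f (σ i) i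

end DetOfApply

lemma isOpen_setOf_strictMono {ι α : Type*} [Finite ι] [Preorder ι] [TopologicalSpace α]
    [LinearOrder α] [OrderClosedTopology α] : IsOpen {y : ι → α | StrictMono y} := by
  simp only [StrictMono, Set.ofPred_forall]
  refine isOpen_iInter_of_finite fun i => isOpen_iInter_of_finite fun j => ?_
  by_cases hij : i < j
  · simpa [hij] using isOpen_lt (continuous_apply i) (continuous_apply j)
  · simp [hij]

lemma eq_sort_of_strictMono_comp {N : ℕ} {α : Type*} [LinearOrder α] {y : Fin N → α}
    {σ : Equiv.Perm (Fin N)} (h : StrictMono (y ∘ σ)) : σ = Tuple.sort y :=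
  Tuple.eq_sort_iff.2 ⟨h.monotone, fun _ _ hij heq => absurd heq (h hij).ne⟩

lemma ae_injective {ι : Type*} [Fintype ι] [DecidableEq ι] :
    ∀ᵐ y : ι → ℝ, Function.Injective y := by
  have hdiag : ∀ i j : ι, i ≠ j → volume {y : ι → ℝ | y i = y j} = 0 := by
    intro i j hij
    let φ : (ι → ℝ) →ₗ[ℝ] ℝ :=
      LinearMap.proj (R := ℝ) (φ := fun _ : ι => ℝ) i - LinearMap.proj j
    have hker : {y : ι → ℝ | y i = y j} = LinearMap.ker φ := by
      ext y
      simp [φ, sub_eq_zero]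
    rw [hker]
    refine Measure.addHaar_submodule _ _ fun htop => ?_
    have : Pi.single i 1 ∈ LinearMap.ker φ := htop ▸ Submodule.mem_top
    simp [φ, Pi.single_eq_of_ne' hij] at this
  rw [ae_iff]
  refine measure_mono_null (fun y hy => ?_) (measure_iUnion_null fun i =>
    measure_iUnion_null fun j => measure_iUnion_null fun hij => hdiag i j hij)
  simp only [Function.Injective, Set.mem_ofPred_eq, not_forall] at hy
  obtain ⟨i, j, hval, hij⟩ := hy
  exact Set.mem_iUnion₂.2 ⟨i, j, Set.mem_iUnion.2 ⟨hij, hval⟩⟩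

section WeylChamber

variable {N : ℕ} {E : Type*} [NormedAddCommGroup E] [NormedSpace ℝ E]
  {G : (Fin N → ℝ) → E}

lemma integral_eq_sum_setIntegral_strictMono_comp (hG : Integrable G) :
    ∫ y, G y = ∑ σ : Equiv.Perm (Fin N), ∫ y in {y | StrictMono (y ∘ σ)}, G y := by
  have hcover : (⋃ σ : Equiv.Perm (Fin N), {y : Fin N → ℝ | StrictMono (y ∘ σ)})
      =ᵐ[volume] (Set.univ : Set (Fin N → ℝ)) := by
    refine Filter.eventuallyEq_univ.2 ?_
    filter_upwards [ae_injective] with y hy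
    exact Set.mem_iUnion.2 ⟨Tuple.sort y,
      (Tuple.monotone_sort y).strictMono_of_injective (hy.comp (Equiv.injective _))⟩
  have hdisj : Pairwise (Function.onFun Disjoint fun σ : Equiv.Perm (Fin N) =>
      {y : Fin N → ℝ | StrictMono (y ∘ σ)}) := by
    intro σ τ hστ
    refine Set.disjoint_left.2 fun y hσ hτ => hστ ?_
    rw [eq_sort_of_strictMono_comp hσ, eq_sort_of_strictMono_comp hτ]
  have hmeas : ∀ σ : Equiv.Perm (Fin N), MeasurableSet {y : Fin N → ℝ | StrictMono (y ∘ σ)} :=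
    fun σ => (isOpen_setOf_strictMono.preimage (by fun_prop)).measurableSet
  rw [← setIntegral_univ, ← setIntegral_congr_set hcover,
    integral_iUnion_ae (fun σ => (hmeas σ).nullMeasurableSet)
      (fun σ τ hστ => (hdisj hστ).aedisjoint) hG.integrableOn, tsum_fintype]

lemma setIntegral_strictMono_sum_comp_perm (hG : Integrable G) :
    ∫ y in {y : Fin N → ℝ | StrictMono y}, ∑ σ : Equiv.Perm (Fin N), G (y ∘ σ) = ∫ y, G y := by
  let T (σ : Equiv.Perm (Fin N)) := MeasurableEquiv.piCongrLeft (fun _ : Fin N => ℝ) σ⁻¹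
  have hT : ∀ σ y, T σ y = y ∘ σ := fun σ y => funext fun i => by
    simpa [T, MeasurableEquiv.coe_piCongrLeft] using
      Equiv.piCongrLeft_apply_apply (fun _ : Fin N => ℝ) σ⁻¹ y (σ i)
  have hTmp : ∀ σ, MeasurePreserving (T σ) := fun σ =>
    volume_measurePreserving_piCongrLeft (fun _ : Fin N => ℝ) σ⁻¹
  have hchamber : ∀ σ : Equiv.Perm (Fin N), ∫ y in {y : Fin N → ℝ | StrictMono y}, G (y ∘ σ)
      = ∫ y in {y | StrictMono (y ∘ ⇑σ⁻¹)}, G y := by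
    intro σ
    have hpre : T σ ⁻¹' {y | StrictMono (y ∘ ⇑σ⁻¹)} = {y | StrictMono y} := by
      ext y
      simp [hT, Function.comp_assoc]
    rw [← (hTmp σ).setIntegral_preimage_emb (T σ).measurableEmbedding G, hpre]
    simp_rw [hT]
  rw [integral_finsetSum _ fun σ _ => ?_, integral_eq_sum_setIntegral_strictMono_comp hG]
  · exact Fintype.sum_equiv (Equiv.inv _) _ _ hchamber
  · simp_rw [← hT]
    exact ((hTmp σ).integrable_comp_emb (T σ).measurableEmbedding).2 hG |>.integrableOn

end WeylChamber

lemma prodDiff_eq_det_vandermonde (N : ℕ) (y : Fin N → ℝ) :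
    prodDiff N y = (Matrix.vandermonde y).det :=
  (Matrix.det_vandermonde y).symm

lemma prodDiff_comp_perm {N : ℕ} (y : Fin N → ℝ) (σ : Equiv.Perm (Fin N)) :
    prodDiff N (y ∘ σ) = Equiv.Perm.sign σ * prodDiff N y := by
  rw [prodDiff_eq_det_vandermonde, prodDiff_eq_det_vandermonde, ← Matrix.det_permute]
  rfl

lemma prodDiff_mul_det_eq_sum_perm {N : ℕ} (y : Fin N → ℝ) (g : Fin N → ℝ → ℝ) :
    prodDiff N y * (Matrix.of fun i j => g j (y i)).det
      = ∑ σ : Equiv.Perm (Fin N), prodDiff N (y ∘ σ) * ∏ j, g j (y (σ j)) := by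
  rw [Matrix.det_apply', Finset.mul_sum]
  refine Finset.sum_congr rfl fun σ _ => ?_
  rw [prodDiff_comp_perm]
  simp only [Matrix.of_apply]
  ring

lemma prodDiff_mul_prod_eq_det {N : ℕ} (y : Fin N → ℝ) (g : Fin N → ℝ → ℝ) :
    prodDiff N y * ∏ j, g j (y j)
      = (Matrix.of fun i j : Fin N => y j ^ (i : ℕ) * g j (y j)).det := by
  rw [prodDiff_eq_det_vandermonde, ← Matrix.det_transpose, mul_comm, ← Matrix.det_mul_row]
  congr 1
  ext i j
  simp [mul_comm]

lemma heatKer_eq_gaussianPDFReal {t : ℝ} (ht : 0 ≤ t) (y a : ℝ) :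
    heatKer t y a = gaussianPDFReal a t.toNNReal y := by
  rw [heatKer, gaussianPDFReal_def, one_div, Real.coe_toNNReal t ht, sub_sq_comm]

lemma integrable_pow_mul_heatKer {t : ℝ} (ht : 0 < t) (k : ℕ) (a : ℝ) :
    Integrable fun y : ℝ => y ^ k * heatKer t y a := by
  have hv : t.toNNReal ≠ 0 := by simpa using ht
  have hmemLp : MemLp id (k : ℝ≥0∞) (gaussianReal a t.toNNReal) := by
    simpa using memLp_id_gaussianReal (μ := a) (v := t.toNNReal) k
  have hmom : Integrable (fun y : ℝ => y ^ k) (gaussianReal a t.toNNReal) := by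
    refine hmemLp.integrable_norm_pow'.mono' (by fun_prop) (ae_of_all _ fun y => ?_)
    simp [norm_pow]
  rw [gaussianReal_of_var_ne_zero a hv, gaussianPDF_def, integrable_withDensity_iff_integrable_smul'
    (by fun_prop) (ae_of_all _ fun _ => ENNReal.ofReal_lt_top)] at hmom
  simp_rw [heatKer_eq_gaussianPDFReal ht.le, mul_comm _ (gaussianPDFReal _ _ _)]
  simpa [ENNReal.toReal_ofReal (gaussianPDFReal_nonneg _ _ _)] using hmom

lemma integral_heatKer {t : ℝ} (ht : 0 < t) (a : ℝ) : ∫ y, heatKer t y a = 1 := by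
  simp_rw [heatKer_eq_gaussianPDFReal ht.le]
  exact integral_gaussianPDFReal_eq_one a (by simpa using ht)

noncomputable def heatMoment (t : ℝ) (m : ℕ) : ℝ := ∫ u, u ^ m * heatKer t u 0

lemma heatKer_add_right (t u a : ℝ) : heatKer t (u + a) a = heatKer t u 0 := by
  simp only [heatKer, sub_add_cancel_right, zero_sub]

lemma integral_pow_mul_heatKer {t : ℝ} (ht : 0 < t) (k : ℕ) (a : ℝ) :
    ∫ y, y ^ k * heatKer t y a
      = ∑ m ∈ Finset.range (k + 1), heatMoment t (k - m) * k.choose m * a ^ m := by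
  have hexpand : ∀ u, (a + u) ^ k * heatKer t u 0
      = ∑ m ∈ Finset.range (k + 1), a ^ m * k.choose m * (u ^ (k - m) * heatKer t u 0) := by
    intro u
    rw [add_pow, Finset.sum_mul]
    exact Finset.sum_congr rfl fun m _ => by ring
  rw [← integral_add_right_eq_self _ a]
  simp_rw [heatKer_add_right, add_comm _ a, hexpand]
  rw [integral_finsetSum _ fun m _ => (integrable_pow_mul_heatKer ht (k - m) 0).const_mul _]
  simp_rw [integral_const_mul, heatMoment]
  exact Finset.sum_congr rfl fun m _ => by ring

section HeatPolynomial

open Polynomial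

noncomputable def heatPoly (t : ℝ) (k : ℕ) : ℝ[X] :=
  X ^ k + ∑ m : Fin k, C (heatMoment t (k - m) * k.choose m) * X ^ (m : ℕ)

lemma heatPoly_monic (t : ℝ) (k : ℕ) : (heatPoly t k).Monic :=
  monic_X_pow_add (degree_sum_fin_lt _)

lemma natDegree_heatPoly (t : ℝ) (k : ℕ) : (heatPoly t k).natDegree = k := by
  rw [heatPoly, natDegree_add_eq_left_of_degree_lt, natDegree_X_pow]
  rw [degree_X_pow]
  exact degree_sum_fin_lt _

lemma eval_heatPoly {t : ℝ} (ht : 0 < t) (k : ℕ) (a : ℝ) :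
    (heatPoly t k).eval a = ∫ y, y ^ k * heatKer t y a := by
  have hmoment_zero : heatMoment t 0 = 1 := by simpa [heatMoment] using integral_heatKer ht 0
  rw [integral_pow_mul_heatKer ht, Finset.sum_range_succ, heatPoly, eval_add, eval_finsetSum,
    Fin.sum_univ_eq_sum_range (fun m => eval a (C (heatMoment t (k - m) * k.choose m) * X ^ m))]
  simp [hmoment_zero, add_comm]

end HeatPolynomial

lemma integrable_prodDiff_mul_prod_heatKer {N : ℕ} {t : ℝ} (ht : 0 < t) (x : Fin N → ℝ) :
    Integrable fun y : Fin N → ℝ => prodDiff N y * ∏ j, heatKer t (y j) (x j) := by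
  simp_rw [prodDiff_mul_prod_eq_det _ fun (j : Fin N) u => heatKer t u (x j)]
  exact integrable_det_of_apply fun (i j : Fin N) => integrable_pow_mul_heatKer ht i (x j)

lemma integral_prodDiff_mul_prod_heatKer {N : ℕ} {t : ℝ} (ht : 0 < t) (x : Fin N → ℝ) :
    ∫ y : Fin N → ℝ, prodDiff N y * ∏ j, heatKer t (y j) (x j) = prodDiff N x := by
  simp_rw [prodDiff_mul_prod_eq_det _ fun (j : Fin N) u => heatKer t u (x j)]
  rw [volume_pi, integral_det_of_apply fun (i j : Fin N) => integrable_pow_mul_heatKer ht i (x j)]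
  simp_rw [← eval_heatPoly ht]
  rw [prodDiff_eq_det_vandermonde, Matrix.det_eval_matrixOfPolynomials_eq_det_vandermonde x
    (fun i => heatPoly t i) (fun i => natDegree_heatPoly t i) (fun i => heatPoly_monic t i),
    ← Matrix.det_transpose]
  rfl

theorem statement_11_general (N : ℕ) (t : ℝ) (ht : 0 < t)
    (x : Fin N → ℝ) :
    ∫ y in {y : Fin N → ℝ | StrictMono y},
        prodDiff N y * Matrix.det (Matrix.of fun i j => heatKer t (y i) (x j))
      = prodDiff N x := by
  simp_rw [prodDiff_mul_det_eq_sum_perm _ fun (j : Fin N) u => heatKer t u (x j)]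
  rw [← integral_prodDiff_mul_prod_heatKer ht x]
  exact setIntegral_strictMono_sum_comp_perm (integrable_prodDiff_mul_prod_heatKer ht x)

/-- For every `N ≥ 1`, `t > 0` and `x` in the Weyl chamber `W_N^A`
(`x_1 < ⋯ < x_N`), the Vandermonde harmonic transform conserves total mass:
`∫_{W_N^A} h_N(y) det_{1≤i,j≤N}[p_t(y_i|x_j)] dy = h_N(x)`. -/
theorem statement_11 (N : ℕ) (hN : 1 ≤ N) (t : ℝ) (ht : 0 < t)
    (x : Fin N → ℝ) (hx : StrictMono x) :
    ∫ y in {y : Fin N → ℝ | StrictMono y},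
        prodDiff N y * Matrix.det (Matrix.of fun i j => heatKer t (y i) (x j))
      = prodDiff N x :=
  statement_11_general N t ht x
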